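/- arXiv:2202.10064 — 10 statements merged into one kernel-verified Lean document; each statement's English description precedes it below -/
import Mathlib

section
/- Let x : ℝ → ℝ be a non-increasing function on [0, B] and define the payment p(b) = b·x(b) + ∫_b^B x(s) ds and utility U(b) = β·p(b) − v·x(b) for constants β > 0 and v ≥ 0. Then for all b ∈ [0, B], U(b) ≤ U(v/β), i.e., bidding b* = v/β maximizes utility. -/
open MeasureTheory intervalIntegral

theorem AntitoneOn.intervalIntegral_le_sub_mul {f : ℝ → ℝ} {a b : ℝ}
    (hf : AntitoneOn f (Set.uIcc a b)) : ∫ s in a..b, f s ≤ (b - a) * f a := by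
  have ha : a ∈ Set.uIcc a b := Set.left_mem_uIcc
  rcases le_total a b with hab | hba
  · have hle := integral_mono_on hab hf.intervalIntegrable
      (intervalIntegrable_const (μ := volume))
      fun s hs => hf ha (Set.Icc_subset_uIcc hs) hs.1
    simpa using hle
  · have hge := integral_mono_on hba (intervalIntegrable_const (μ := volume))
      (hf.intervalIntegrable.symm) fun s hs => hf (Set.Icc_subset_uIcc' hs) ha hs.2
    rw [integral_symm b a]
    simp only [intervalIntegral.integral_const, smul_eq_mul] at hge
    linarith

/-- Bidding b* = v/β maximizes utility under the Myerson payment rule. -/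
theorem stmt_0 (B β v : ℝ) (x : ℝ → ℝ)
    (hβ : 0 < β) (hv : 0 ≤ v) (hvB : v / β ≤ B)
    (hx : AntitoneOn x (Set.Icc 0 B)) :
    ∀ b ∈ Set.Icc (0:ℝ) B,
      β * (b * x b + ∫ s in b..B, x s) - v * x b ≤
      β * ((v / β) * x (v / β) + ∫ s in (v / β)..B, x s) - v * x (v / β) := by
  intro b hb
  set c := v / β with hc_def
  have hc : c ∈ Set.Icc (0:ℝ) B := ⟨div_nonneg hv hβ.le, hvB⟩
  have hB : B ∈ Set.Icc (0:ℝ) B := ⟨hc.1.trans hvB, le_rfl⟩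
  have hv_eq : v = β * c := by rw [hc_def]; field_simp
  have hsplit : ∫ s in b..B, x s = (∫ s in b..c, x s) + ∫ s in c..B, x s :=
    (integral_add_adjacent_intervals
      (hx.mono (Set.uIcc_subset_Icc hb hc)).intervalIntegrable
      (hx.mono (Set.uIcc_subset_Icc hc hB)).intervalIntegrable).symm
  -- U(b) - U(c) = β ((b - c) x b + ∫ b..c x), which is ≤ 0 for antitone x
  have hrect := (hx.mono (Set.uIcc_subset_Icc hb hc)).intervalIntegral_le_sub_mul
  rw [hsplit, hv_eq]
  nlinarith [mul_le_mul_of_nonneg_left hrect hβ.le]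
end

section
/- Let p ≥ 0, β ∈ (0,1], v ≥ 0, x > 0, x_max > 0 with β·p/x − v ≥ 0. Define U(x̂) = (β·p·min(x̂/x, 1) − x̂·v) if x̂ ≤ x_max and U(x̂) = 0 if x̂ > x_max, for x̂ ≥ 0. Then U is maximized at x̂ = min(x, x_max). -/
/-- Submitting x̂ = min(x, x_max) units of work maximizes the worker's utility. -/
theorem stmt_2 (p β v x xmax : ℝ)
    (hp : 0 ≤ p) (hβ0 : 0 < β) (hβ1 : β ≤ 1) (hv : 0 ≤ v)
    (hx : 0 < x) (hxmax : 0 < xmax) (hmargin : 0 ≤ β * p / x - v)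
    (U : ℝ → ℝ)
    (hU : ∀ xh : ℝ, U xh = if xh ≤ xmax then β * p * min (xh / x) 1 - xh * v else 0) :
    ∀ xh : ℝ, 0 ≤ xh → U xh ≤ U (min x xmax) := by
  intro xh hxh
  set m := min x xmax with hm
  have hmx : m ≤ x := min_le_left _ _
  have hmxmax : m ≤ xmax := min_le_right _ _
  have hm0 : 0 ≤ m := le_min hx.le hxmax.le
  have hminm : min (m / x) 1 = m / x := min_eq_left (by
    rw [div_le_one hx]; exact hmx)
  have hc : 0 ≤ β * p / x - v := hmargin
  have hUm : U m = m * (β * p / x - v) := by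
    rw [hU, if_pos hmxmax, hminm]; field_simp
  have hUm0 : 0 ≤ U m := by rw [hUm]; exact mul_nonneg hm0 hc
  rw [hU xh]
  by_cases h1 : xh ≤ xmax
  · rw [if_pos h1]
    by_cases h2 : xh ≤ x
    · have : min (xh / x) 1 = xh / x := min_eq_left (by rw [div_le_one hx]; exact h2)
      rw [this, hUm]
      have hxm : xh ≤ m := le_min h2 h1
      have : β * p * (xh / x) - xh * v = xh * (β * p / x - v) := by field_simp
      rw [this]
      exact mul_le_mul_of_nonneg_right hxm hc
    · push_neg at h2
      have : min (xh / x) 1 = 1 := min_eq_right (by rw [le_div_iff₀ hx]; linarith)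
      rw [this, hUm]
      have hmeq : m = x := min_eq_left (le_of_lt (lt_of_lt_of_le h2 h1))
      rw [hmeq]
      have hxx : x * (β * p / x - v) = β * p - x * v := by field_simp
      rw [hxx, mul_one]
      nlinarith
  · rw [if_neg h1]; exact hUm0
end

section
/- Consider minimizing ∑_{i=1}^n a_i · x_i^2 subject to ∑_i x_i = c and 0 ≤ x_i ≤ m_i, with a_i > 0, m_i > 0, 0 < c ≤ ∑_i m_i. Let A ⊆ {1,…,n} be the set of indices where the optimal solution attains x_i = m_i. Then for all i ∉ A, x_i = c′ · a_i^{-1} / (∑_{j ∉ A} a_j^{-1}), where c′ = c − ∑_{j ∈ A} m_j. -/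
open Finset

/-- KKT / water-filling characterization: uncapped workers receive the remaining
    work proportionally to a_i⁻¹. -/
theorem stmt_5 (n : ℕ) (a m : Fin n → ℝ) (c : ℝ)
    (ha : ∀ i, 0 < a i) (hm : ∀ i, 0 < m i)
    (hc : 0 < c) (hcm : c ≤ ∑ i, m i)
    (x : Fin n → ℝ)
    (hsum : ∑ i, x i = c) (hbound : ∀ i, 0 ≤ x i ∧ x i ≤ m i)
    (hopt : ∀ y : Fin n → ℝ, (∑ i, y i = c ∧ ∀ i, 0 ≤ y i ∧ y i ≤ m i) →
      ∑ i, a i * (x i) ^ 2 ≤ ∑ i, a i * (y i) ^ 2)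
    (A : Finset (Fin n)) (hA : ∀ i, i ∈ A ↔ x i = m i) :
    ∀ i ∉ A, x i = (c - ∑ j ∈ A, m j) * (a i)⁻¹ / ∑ j ∈ Aᶜ, (a j)⁻¹ := by
  -- Step 1: perturbation lemma (move ε from j to i)
  have hmove : ∀ i j : Fin n, i ≠ j → ∀ ε : ℝ, 0 < ε → ε ≤ x j → x i + ε ≤ m i →
      0 ≤ 2 * (a i * x i - a j * x j) + (a i + a j) * ε := by
    intro i j hij ε hε hεj hεi
    set y : Fin n → ℝ := fun k => if k = i then x i + ε else if k = j then x j - ε else x k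
      with hy
    have hdiff : ∀ k, y k - x k = (if k = i then ε else 0) + (if k = j then -ε else 0) := by
      intro k
      by_cases h1 : k = i
      · subst h1
        simp [hy, if_neg hij]
      · by_cases h2 : k = j <;> simp [hy, h1, h2, Ne.symm hij]
    have hysum : ∑ k, y k = c := by
      have : ∑ k, (y k - x k) = 0 := by
        simp only [hdiff, Finset.sum_add_distrib, Finset.sum_ite_eq' Finset.univ,
          Finset.mem_univ, if_true]
        ring
      have := Finset.sum_sub_distrib (f := y) (g := x) (s := Finset.univ) ▸ this
      linarith [Finset.sum_sub_distrib (f := y) (g := x) (s := Finset.univ), hsum, this]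
    have hybound : ∀ k, 0 ≤ y k ∧ y k ≤ m k := by
      intro k
      by_cases h1 : k = i
      · subst h1
        constructor
        · simp only [hy, if_pos rfl]; linarith [(hbound k).1]
        · simpa [hy] using hεi
      · by_cases h2 : k = j
        · subst h2
          constructor
          · simp [hy, h1]; linarith
          · simp [hy, h1]; linarith [(hbound k).2]
        · simp [hy, h1, h2]; exact hbound k
    have hle := hopt y ⟨hysum, hybound⟩
    have hobj : ∑ k, a k * (y k) ^ 2 - ∑ k, a k * (x k) ^ 2 =
        ε * (2 * (a i * x i - a j * x j) + (a i + a j) * ε) := by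
      rw [← Finset.sum_sub_distrib]
      have : ∀ k, a k * (y k) ^ 2 - a k * (x k) ^ 2 =
          (if k = i then a i * ((x i + ε) ^ 2 - (x i) ^ 2) else 0) +
          (if k = j then a j * ((x j - ε) ^ 2 - (x j) ^ 2) else 0) := by
        intro k
        by_cases h1 : k = i
        · subst h1; simp [hy, if_neg hij]; ring
        · by_cases h2 : k = j
          · subst h2; simp [hy, h1, Ne.symm hij]; ring
          · simp [hy, h1, h2]
      simp only [this, Finset.sum_add_distrib, Finset.sum_ite_eq' Finset.univ,
        Finset.mem_univ, if_true]
      ring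
    have hε0 : 0 ≤ ε * (2 * (a i * x i - a j * x j) + (a i + a j) * ε) := by
      linarith [hobj, hle]
    nlinarith [hε0, hε]
  -- Step 2: if i is uncapped and x j > 0, then a j * x j ≤ a i * x i
  have hle : ∀ i j : Fin n, i ∉ A → 0 < x j → a j * x j ≤ a i * x i := by
    intro i j hiA hxj
    by_cases hij : i = j
    · subst hij; exact le_rfl
    by_contra h
    push_neg at h
    have hd : 0 < a j * x j - a i * x i := by linarith
    set d := a j * x j - a i * x i with hdef
    have hxi : x i < m i := lt_of_le_of_ne (hbound i).2 (fun h => hiA ((hA i).2 h))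
    have hab : 0 < a i + a j := by linarith [ha i, ha j]
    set ε := min (x j) (min (m i - x i) (d / (a i + a j))) with hεdef
    have hε : 0 < ε := by
      apply lt_min hxj
      exact lt_min (by linarith) (div_pos hd hab)
    have h1 : ε ≤ x j := min_le_left _ _
    have h2 : x i + ε ≤ m i := by
      have : ε ≤ m i - x i := le_trans (min_le_right _ _) (min_le_left _ _)
      linarith
    have h3 : ε ≤ d / (a i + a j) := (min_le_right _ _).trans (min_le_right _ _)
    have h4 : (a i + a j) * ε ≤ d := by
      have := (le_div_iff₀ hab).mp h3
      linarith
    have := hmove i j hij ε hε h1 h2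
    nlinarith [this, hd, h4]
  -- Step 3: a i * x i constant on Aᶜ
  have hEq : ∀ i ∉ A, ∀ j, j ∉ A → a i * x i = a j * x j := by
    intro i hi j hj
    apply le_antisymm
    · rcases (hbound i).1.eq_or_lt with h | h
      · have : a i * x i = 0 := by rw [← h]; ring
        rw [this]
        exact mul_nonneg (ha j).le (hbound j).1
      · exact hle j i hj h
    · rcases (hbound j).1.eq_or_lt with h | h
      · have : a j * x j = 0 := by rw [← h]; ring
        rw [this]
        exact mul_nonneg (ha i).le (hbound i).1
      · exact hle i j hi h
  -- Final computation
  intro i hi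
  have hiC : i ∈ Aᶜ := Finset.mem_compl.mpr hi
  have hS : 0 < ∑ j ∈ Aᶜ, (a j)⁻¹ := by
    apply Finset.sum_pos' (fun j _ => inv_nonneg.mpr (ha j).le)
    exact ⟨i, hiC, inv_pos.mpr (ha i)⟩
  have hsplit : ∑ j ∈ Aᶜ, x j = c - ∑ j ∈ A, m j := by
    have h1 : ∑ j ∈ A, x j + ∑ j ∈ Aᶜ, x j = c := by
      rw [Finset.sum_add_sum_compl]; exact hsum
    have h2 : ∑ j ∈ A, x j = ∑ j ∈ A, m j :=
      Finset.sum_congr rfl (fun j hj => (hA j).1 hj)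
    linarith
  have hx : ∀ j ∈ Aᶜ, x j = (a i * x i) * (a j)⁻¹ := by
    intro j hj
    have := hEq i hi j (Finset.mem_compl.mp hj)
    have haj : a j ≠ 0 := (ha j).ne'
    field_simp
    linarith [this]
  have hsum2 : ∑ j ∈ Aᶜ, x j = (a i * x i) * ∑ j ∈ Aᶜ, (a j)⁻¹ := by
    rw [Finset.mul_sum]
    exact Finset.sum_congr rfl hx
  have hval : a i * x i = (c - ∑ j ∈ A, m j) / ∑ j ∈ Aᶜ, (a j)⁻¹ := by
    rw [eq_div_iff hS.ne']
    rw [← hsum2, hsplit]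
  have hai : a i ≠ 0 := (ha i).ne'
  have hxi : x i = (a i)⁻¹ * (a i * x i) := by field_simp
  rw [hxi, hval]
  ring
end

section
/- In the quadratic program minimize ∑_i δ_i^k x_i^2 subject to ∑_i x_i = c, 0 ≤ x_i ≤ m_i (δ_i > 0, m_i > 0, 0 < c ≤ ∑ m_i), order the indices so that γ_1 ≤ γ_2 ≤ … ≤ γ_n where γ_i = δ_i^k · m_i. Then the set of indices at which the optimal solution satisfies x_i = m_i with strictly positive Lagrange multiplier is a prefix {1, 2, …, r} of the ordering (possibly empty). -/
open Finset

/-- Active-set structure: with γ_i = δ_i^k·m_i sorted increasingly, the set of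
    indices whose capacity constraint binds with strictly positive Lagrange
    multiplier is a prefix of the ordering. -/
theorem stmt_6 (n : ℕ) (δ m : Fin n → ℝ) (k c : ℝ)
    (hδ : ∀ i, 0 < δ i) (hm : ∀ i, 0 < m i) (hk : 0 ≤ k)
    (hc : 0 < c) (hcm : c ≤ ∑ i, m i)
    (hγ : ∀ i j : Fin n, i ≤ j → δ i ^ k * m i ≤ δ j ^ k * m j)
    (x : Fin n → ℝ)
    (hsum : ∑ i, x i = c) (hbound : ∀ i, 0 ≤ x i ∧ x i ≤ m i)
    -- KKT conditions with multipliers λ (for x_i ≤ m_i) and μ (for ∑ x_i = c)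
    (lam : Fin n → ℝ) (μ : ℝ)
    (hlam : ∀ i, 0 ≤ lam i)
    (hstat : ∀ i, 2 * δ i ^ k * x i + lam i - μ = 0)
    (hcs : ∀ i, lam i * (x i - m i) = 0) :
    ∃ r : ℕ, ∀ i : Fin n, ((x i = m i ∧ 0 < lam i) ↔ (i : ℕ) < r) := by
  classical
  set P : Fin n → Prop := fun i => x i = m i ∧ 0 < lam i with hP
  have hdc : ∀ i j : Fin n, i ≤ j → P j → P i := by
    rintro i j hij ⟨hxj, hlj⟩
    have hlam_i : lam i = μ - 2 * δ i ^ k * x i := by linarith [hstat i]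
    have hlam_j : lam j = μ - 2 * δ j ^ k * m j := by
      have := hstat j; rw [hxj] at this; linarith
    have hpos : (0:ℝ) < δ i ^ k := Real.rpow_pos_of_pos (hδ i) k
    have h1 : δ i ^ k * x i ≤ δ i ^ k * m i :=
      mul_le_mul_of_nonneg_left (hbound i).2 hpos.le
    have h2 : δ i ^ k * m i ≤ δ j ^ k * m j := hγ i j hij
    have hli : 0 < lam i := by rw [hlam_i]; rw [hlam_j] at hlj; nlinarith
    refine ⟨?_, hli⟩
    have hz : x i - m i = 0 := by
      rcases mul_eq_zero.mp (hcs i) with h | h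
      · exact absurd h (ne_of_gt hli)
      · exact h
    linarith
  by_cases hall : ∀ i, P i
  · exact ⟨n, fun i => ⟨fun _ => i.2, fun _ => hall i⟩⟩
  · push_neg at hall
    obtain ⟨j0, hj0⟩ := hall
    set S := univ.filter (fun i => ¬ P i) with hS
    have hSne : S.Nonempty := ⟨j0, by simp [hS, hj0]⟩
    set i0 := S.min' hSne with hi0def
    have hi0 : ¬ P i0 := (mem_filter.mp (S.min'_mem hSne)).2
    refine ⟨i0, fun i => ⟨?_, ?_⟩⟩
    · intro hPi
      by_contra h
      push_neg at h
      exact hi0 (hdc i0 i (by exact_mod_cast h) hPi)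
    · intro hi
      by_contra hnP
      have hle : i0 ≤ i := S.min'_le i (mem_filter.mpr ⟨mem_univ i, hnP⟩)
      rw [Fin.le_def] at hle
      omega
end

section
/- Let a_1,…,a_n > 0, m_1,…,m_n > 0, c > 0, and define for a prefix set A_r = {1,…,r} (r < n): μ(A_r) = (c − ∑_{j=1}^r m_j)/(∑_{j=r+1}^n a_j). Suppose the indices are ordered so that m_1/a_1 ≤ m_2/a_2 ≤ … ≤ m_n/a_n and c − ∑_{j=1}^r m_j > 0. Then for indices r < q < i ≤ n: if m_i/a_i < μ(A_r), then m_i/a_i < μ(A_q). -/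
open Finset

/-! Removing from the pool workers whose ratio `m j / a j` lies below the water level `S / D`
takes away capacity `∑ m j` at most the water level times the weight `∑ a j` removed, so the
level of what remains can only rise. -/

theorem div_le_sub_div_sub {S D M A : ℝ} (hD : D ≠ 0) (hDA : 0 < D - A)
    (hM : M ≤ S / D * A) : S / D ≤ (S - M) / (D - A) := by
  rw [le_div_iff₀ hDA]
  calc S / D * (D - A) = S - S / D * A := by field_simp
    _ ≤ S - M := by linarith

theorem Finset.sum_le_mul_sum_of_div_le {ι : Type*} {s : Finset ι} {a m : ι → ℝ} {t : ℝ}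
    (ha : ∀ j ∈ s, 0 < a j) (hmt : ∀ j ∈ s, m j / a j ≤ t) :
    ∑ j ∈ s, m j ≤ t * ∑ j ∈ s, a j := by
  rw [mul_sum]
  exact sum_le_sum fun j hj => (div_le_iff₀ (ha j hj)).mp (hmt j hj)

theorem stmt_7_general (n r q i : ℕ) (a m : ℕ → ℝ) (c : ℝ)
    (ha : ∀ j, j < n → 0 < a j)
    (hmono : ∀ j₁ j₂, j₁ ≤ j₂ → j₂ < n → m j₁ / a j₁ ≤ m j₂ / a j₂)
    (hrq : r < q) (hqi : q < i) (hin : i < n)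
    (hlt : m i / a i <
      (c - ∑ j ∈ Finset.range r, m j) / ∑ j ∈ Finset.Ico r n, a j) :
    m i / a i <
      (c - ∑ j ∈ Finset.range q, m j) / ∑ j ∈ Finset.Ico q n, a j := by
  have hpos : ∀ k, k < n → 0 < ∑ j ∈ Ico k n, a j := fun k hk =>
    sum_pos (fun j hj => ha j (mem_Ico.mp hj).2) ⟨k, mem_Ico.mpr ⟨le_rfl, hk⟩⟩
  have hblock : ∑ j ∈ Ico r q, m j ≤
      (c - ∑ j ∈ range r, m j) / (∑ j ∈ Ico r n, a j) * ∑ j ∈ Ico r q, a j :=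
    sum_le_mul_sum_of_div_le (fun j hj => ha j (by grind))
      fun j hj => (hmono j i (by grind) hin).trans hlt.le
  have hm_split : ∑ j ∈ range q, m j = ∑ j ∈ range r, m j + ∑ j ∈ Ico r q, m j :=
    (sum_range_add_sum_Ico _ hrq.le).symm
  have ha_split : ∑ j ∈ Ico q n, a j = ∑ j ∈ Ico r n, a j - ∑ j ∈ Ico r q, a j := by
    rw [← sum_Ico_consecutive _ hrq.le (hqi.trans hin).le]
    ring
  rw [hm_split, ha_split, ← sub_sub]
  exact hlt.trans_le <| div_le_sub_div_sub (hpos r (by omega)).ne'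
    (ha_split ▸ hpos q (by omega)) hblock

/-- Water-level monotonicity: if worker i is below the water level μ(A_r),
    it stays below the water level μ(A_q) for any larger prefix A_q with q < i. -/
theorem stmt_7 (n r q i : ℕ) (a m : ℕ → ℝ) (c : ℝ)
    (ha : ∀ j, j < n → 0 < a j) (hm : ∀ j, j < n → 0 < m j) (hc : 0 < c)
    (hmono : ∀ j₁ j₂, j₁ ≤ j₂ → j₂ < n → m j₁ / a j₁ ≤ m j₂ / a j₂)
    (hrq : r < q) (hqi : q < i) (hin : i < n)
    (hcr : 0 < c - ∑ j ∈ Finset.range r, m j)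
    (hlt : m i / a i <
      (c - ∑ j ∈ Finset.range r, m j) / ∑ j ∈ Finset.Ico r n, a j) :
    m i / a i <
      (c - ∑ j ∈ Finset.range q, m j) / ∑ j ∈ Finset.Ico q n, a j :=
  stmt_7_general n r q i a m c ha hmono hrq hqi hin hlt
end

section
/- In the quadratic program minimize δ_1^k x_1^2 + δ_2^k x_2^2 subject to x_1 + x_2 = c, 0 ≤ x_i ≤ m_i (all parameters positive, c ≤ m_1 + m_2), the optimal x_1 as a function of δ_1 (holding δ_2, m_1, m_2, c fixed) is non-increasing: explicitly x_1(δ_1) = min(m_1, max(c − m_2, c·δ_1^{-k}/(δ_1^{-k} + δ_2^{-k}))). -/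
/-- Two-worker allocation: the optimal x₁ has the explicit closed form
    min(m₁, max(c − m₂, c·δ₁^{-k}/(δ₁^{-k} + δ₂^{-k}))), it solves the quadratic
    program, and it is non-increasing in δ₁. -/
theorem stmt_8 (m₁ m₂ c k δ₂ : ℝ)
    (hm₁ : 0 < m₁) (hm₂ : 0 < m₂) (hc : 0 < c) (hcm : c ≤ m₁ + m₂)
    (hk : 0 < k) (hδ₂ : 0 < δ₂)
    (f : ℝ → ℝ)
    (hf : ∀ δ₁ : ℝ, f δ₁ =
      min m₁ (max (c - m₂) (c * δ₁ ^ (-k) / (δ₁ ^ (-k) + δ₂ ^ (-k))))) :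
    (∀ δ₁ : ℝ, 0 < δ₁ →
      (0 ≤ f δ₁ ∧ f δ₁ ≤ m₁ ∧ 0 ≤ c - f δ₁ ∧ c - f δ₁ ≤ m₂) ∧
      ∀ y₁ y₂ : ℝ, y₁ + y₂ = c → 0 ≤ y₁ → y₁ ≤ m₁ → 0 ≤ y₂ → y₂ ≤ m₂ →
        δ₁ ^ k * (f δ₁) ^ 2 + δ₂ ^ k * (c - f δ₁) ^ 2 ≤
          δ₁ ^ k * y₁ ^ 2 + δ₂ ^ k * y₂ ^ 2) ∧
    AntitoneOn f (Set.Ioi 0) := by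
  have hb : (0:ℝ) < δ₂ ^ (-k) := Real.rpow_pos_of_pos hδ₂ _
  have hB : (0:ℝ) < δ₂ ^ k := Real.rpow_pos_of_pos hδ₂ _
  have hcm2 : c - m₂ ≤ m₁ := by linarith
  constructor
  · intro δ₁ hδ₁
    have ha : (0:ℝ) < δ₁ ^ (-k) := Real.rpow_pos_of_pos hδ₁ _
    have hA : (0:ℝ) < δ₁ ^ k := Real.rpow_pos_of_pos hδ₁ _
    set a := δ₁ ^ (-k) with ha_def
    set b := δ₂ ^ (-k) with hb_def
    set A := δ₁ ^ k with hA_def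
    set B := δ₂ ^ k with hB_def
    have hab : (0:ℝ) < a + b := by linarith
    set g := c * a / (a + b) with hg_def
    have hg0 : 0 < g := by positivity
    have hgc : g ≤ c := by
      rw [div_le_iff₀ hab]; nlinarith
    have hfd : f δ₁ = min m₁ (max (c - m₂) g) := hf δ₁
    have hf0 : 0 ≤ f δ₁ := by
      rw [hfd]
      exact le_of_lt (lt_min hm₁ (lt_of_lt_of_le hg0 (le_max_right _ _)))
    have hfm : f δ₁ ≤ m₁ := by rw [hfd]; exact min_le_left _ _
    have hfc : f δ₁ ≤ c := by
      rw [hfd]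
      exact le_trans (min_le_right _ _) (max_le (by linarith) hgc)
    have hfl : c - m₂ ≤ f δ₁ := by
      rw [hfd]; exact le_min hcm2 (le_max_left _ _)
    refine ⟨⟨hf0, hfm, by linarith, by linarith⟩, ?_⟩
    intro y₁ y₂ hsum hy₁0 hy₁m hy₂0 hy₂m
    have hAa : A * a = 1 := by
      rw [hA_def, ha_def, ← Real.rpow_add hδ₁, add_neg_cancel, Real.rpow_zero]
    have hBb : B * b = 1 := by
      rw [hB_def, hb_def, ← Real.rpow_add hδ₂, add_neg_cancel, Real.rpow_zero]
    have hAg : (A + B) * g = B * c := by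
      rw [hg_def, mul_comm (A + B), div_mul_eq_mul_div, div_eq_iff hab.ne']
      linear_combination c * hAa - c * hBb
    have hy₂ : y₂ = c - y₁ := by linarith
    have hproj : 0 ≤ ((A + B) * f δ₁ - B * c) * (y₁ - f δ₁) := by
      rcases le_or_gt (max (c - m₂) g) m₁ with hcase | hcase
      · rcases le_or_gt (c - m₂) g with hc2 | hc2
        · have hfg : f δ₁ = g := by
            rw [hfd, max_eq_right hc2]
            exact min_eq_right (le_trans (le_max_right (c - m₂) g) hcase)
          rw [hfg, hAg]
          simp
        · have hfe : f δ₁ = c - m₂ := by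
            rw [hfd, max_eq_left hc2.le, min_eq_right hcm2]
          have h1 : 0 ≤ (A + B) * f δ₁ - B * c := by
            have : (A + B) * g < (A + B) * f δ₁ := by
              apply mul_lt_mul_of_pos_left _ (by linarith)
              rw [hfe]; exact hc2
            linarith [hAg]
          have h2 : 0 ≤ y₁ - f δ₁ := by rw [hfe]; linarith
          exact mul_nonneg h1 h2
      · have hfe : f δ₁ = m₁ := by rw [hfd, min_eq_left hcase.le]
        have hgm : m₁ < g := by
          rcases lt_max_iff.mp hcase with h | h
          · linarith
          · exact h
        have h1 : (A + B) * f δ₁ - B * c ≤ 0 := by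
          have : (A + B) * f δ₁ < (A + B) * g := by
            apply mul_lt_mul_of_pos_left _ (by linarith)
            rw [hfe]; exact hgm
          linarith [hAg]
        have h2 : y₁ - f δ₁ ≤ 0 := by rw [hfe]; linarith
        nlinarith [mul_nonneg (neg_nonneg.mpr h1) (neg_nonneg.mpr h2)]
    rw [hy₂]
    nlinarith [sq_nonneg (y₁ - f δ₁), mul_nonneg (by linarith : (0:ℝ) ≤ A + B) (sq_nonneg (y₁ - f δ₁)), hproj]
  · intro x hx y hy hxy
    simp only [Set.mem_Ioi] at hx hy
    have hux : (0:ℝ) < x ^ (-k) := Real.rpow_pos_of_pos hx _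
    have huy : (0:ℝ) < y ^ (-k) := Real.rpow_pos_of_pos hy _
    have hvu : y ^ (-k) ≤ x ^ (-k) := by
      rw [Real.rpow_neg hx.le, Real.rpow_neg hy.le]
      exact inv_anti₀ (Real.rpow_pos_of_pos hx _)
        (Real.rpow_le_rpow hx.le hxy hk.le)
    have hgle : c * y ^ (-k) / (y ^ (-k) + δ₂ ^ (-k)) ≤
        c * x ^ (-k) / (x ^ (-k) + δ₂ ^ (-k)) := by
      rw [div_le_div_iff₀ (by linarith) (by linarith)]
      nlinarith [mul_le_mul_of_nonneg_right hvu hb.le]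
    rw [hf x, hf y]
    exact min_le_min le_rfl (max_le_max le_rfl hgle)
end

section
/- Let δ_1 < δ_2 ≤ … ≤ δ_n (all positive) and c > 0 with c ≤ min_i m_i where m_i > 0. For each k ≥ 0, let x^{(k)} minimize ∑_i δ_i^k x_i^2 subject to ∑_i x_i = c and 0 ≤ x_i ≤ m_i. Then x^{(k)}_1 = c·δ_1^{-k}/(∑_j δ_j^{-k}), and as k → ∞, x^{(k)}_1 → c and x^{(k)}_i → 0 for all i ≥ 2. -/
open Finset Filter Topology

/-!
With weights `w i > 0`, the point `y i ∝ (w i)⁻¹` of the hyperplane `∑ i, y i = c` satisfies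
`w i * y i = λ` for a constant `λ`, which gives the Pythagoras identity
`∑ w (z - y)² = ∑ w z² - ∑ w y²` on that hyperplane; so `y` is its unique minimizer of `∑ w z²`.
For `c ≤ min m` the point `y` also satisfies the box constraints, so it is the constrained minimizer.
With `w i = δ i ^ k`, the share of worker `i₀` is `(∑ j, (δ i₀ / δ j) ^ k)⁻¹`, which tends to `1`
because every other ratio is `< 1`; the other coordinates are squeezed between `0` and `c - X k i₀`.
-/

section

variable {ι : Type*} [Fintype ι]

theorem sum_mul_sq_sub_eq_of_mul_eq {w y z : ι → ℝ} {l : ℝ} (hwy : ∀ i, w i * y i = l)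
    (hz : ∑ i, z i = ∑ i, y i) :
    ∑ i, w i * (z i - y i) ^ 2 = ∑ i, w i * z i ^ 2 - ∑ i, w i * y i ^ 2 := by
  have hexpand : ∀ i, w i * (z i - y i) ^ 2 = w i * z i ^ 2 - 2 * l * z i + l * y i :=
    fun i => by linear_combination (y i - 2 * z i) * hwy i
  have hy : ∀ i, w i * y i ^ 2 = l * y i := fun i => by linear_combination y i * hwy i
  simp only [hexpand, hy, sum_add_distrib, sum_sub_distrib, ← mul_sum, hz]
  ring

theorem eq_of_sum_mul_sq_le {w y z : ι → ℝ} {l : ℝ} (hw : ∀ i, 0 < w i)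
    (hwy : ∀ i, w i * y i = l) (hz : ∑ i, z i = ∑ i, y i)
    (hle : ∑ i, w i * z i ^ 2 ≤ ∑ i, w i * y i ^ 2) : z = y := by
  have hnn : ∀ i ∈ univ, 0 ≤ w i * (z i - y i) ^ 2 := fun i _ => by
    have := hw i
    positivity
  have hzero : ∑ i, w i * (z i - y i) ^ 2 = 0 :=
    le_antisymm (by rw [sum_mul_sq_sub_eq_of_mul_eq hwy hz]; linarith) (sum_nonneg hnn)
  funext i
  have hi := (mul_eq_zero.1 ((sum_eq_zero_iff_of_nonneg hnn).1 hzero i (mem_univ i))).resolve_left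
    (hw i).ne'
  exact sub_eq_zero.1 (pow_eq_zero_iff two_ne_zero |>.1 hi)

noncomputable def proportionalAlloc (v : ι → ℝ) (c : ℝ) (i : ι) : ℝ :=
  c * v i / ∑ j, v j

theorem sum_proportionalAlloc {v : ι → ℝ} (hv : ∑ j, v j ≠ 0) (c : ℝ) :
    ∑ i, proportionalAlloc v c i = c := by
  simp only [proportionalAlloc, ← sum_div, ← mul_sum]
  field_simp

theorem proportionalAlloc_nonneg {v : ι → ℝ} (hv : ∀ i, 0 ≤ v i) {c : ℝ} (hc : 0 ≤ c) (i : ι) :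
    0 ≤ proportionalAlloc v c i :=
  div_nonneg (mul_nonneg hc (hv i)) (sum_nonneg fun j _ => hv j)

theorem proportionalAlloc_le {v : ι → ℝ} (hv : ∀ i, 0 ≤ v i) {c : ℝ} (hc : 0 ≤ c) (i : ι) :
    proportionalAlloc v c i ≤ c := by
  rcases (sum_nonneg (s := univ) fun j _ => hv j).eq_or_lt with hS | hS
  · simp [proportionalAlloc, ← hS, hc]
  · rw [proportionalAlloc, div_le_iff₀ hS]
    exact mul_le_mul_of_nonneg_left (single_le_sum (fun j _ => hv j) (mem_univ i)) hc

theorem eq_proportionalAlloc_of_isMinOn [Nonempty ι] {w m X : ι → ℝ} {c : ℝ}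
    (hw : ∀ i, 0 < w i) (hc : 0 ≤ c) (hcm : ∀ i, c ≤ m i) (hX : ∑ i, X i = c)
    (hmin : IsMinOn (fun y => ∑ i, w i * y i ^ 2)
      {y | ∑ i, y i = c ∧ ∀ i, 0 ≤ y i ∧ y i ≤ m i} X) :
    X = proportionalAlloc (fun i => (w i)⁻¹) c := by
  set y := proportionalAlloc (fun i => (w i)⁻¹) c
  have hv : ∀ i, 0 ≤ (w i)⁻¹ := fun i => (inv_pos.2 (hw i)).le
  have hS : ∑ j, (w j)⁻¹ ≠ 0 := (sum_pos (fun j _ => inv_pos.2 (hw j)) univ_nonempty).ne'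
  have hy : ∑ i, y i = c := sum_proportionalAlloc hS c
  have hwy : ∀ i, w i * y i = c / ∑ j, (w j)⁻¹ := fun i => by
    simp only [y, proportionalAlloc]
    field_simp [(hw i).ne']
  refine eq_of_sum_mul_sq_le hw hwy (hX.trans hy.symm) (isMinOn_iff.1 hmin y ⟨hy, fun i => ?_⟩)
  exact ⟨proportionalAlloc_nonneg hv hc i, (proportionalAlloc_le hv hc i).trans (hcm i)⟩

theorem rpow_neg_div_sum_rpow_neg {δ : ι → ℝ} (hδ : ∀ i, 0 < δ i) (i₀ : ι) (k : ℝ) :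
    δ i₀ ^ (-k) / ∑ j, δ j ^ (-k) = (∑ j, (δ i₀ / δ j) ^ k)⁻¹ := by
  have hratio : ∀ j, (δ i₀ / δ j) ^ k = δ i₀ ^ k * δ j ^ (-k) := fun j => by
    rw [Real.div_rpow (hδ i₀).le (hδ j).le, Real.rpow_neg (hδ j).le, div_eq_mul_inv]
  rw [sum_congr rfl fun j _ => hratio j, ← mul_sum, Real.rpow_neg (hδ i₀).le, mul_inv,
    div_eq_mul_inv]

theorem tendsto_rpow_neg_div_sum_rpow_neg {δ : ι → ℝ} {i₀ : ι} (hδ : ∀ i, 0 < δ i)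
    (hmin : ∀ j ≠ i₀, δ i₀ < δ j) :
    Tendsto (fun k : ℝ => δ i₀ ^ (-k) / ∑ j, δ j ^ (-k)) atTop (𝓝 1) := by
  classical
  have hratio : ∀ j, Tendsto (fun k : ℝ => (δ i₀ / δ j) ^ k) atTop
      (𝓝 (if j = i₀ then 1 else 0)) := by
    intro j
    split_ifs with hj
    · simp [hj, div_self (hδ i₀).ne']
    · exact tendsto_rpow_atTop_of_base_lt_one _
        (neg_one_lt_zero.trans (div_pos (hδ i₀) (hδ j)))
        ((div_lt_one (hδ j)).2 (hmin j hj))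
  have hsum := tendsto_finsetSum univ fun j _ => hratio j
  rw [sum_ite_eq' univ i₀, if_pos (mem_univ i₀)] at hsum
  simpa only [rpow_neg_div_sum_rpow_neg hδ, inv_one] using hsum.inv₀ one_ne_zero

theorem tendsto_zero_of_sum_eq_of_tendsto {α : Type*} {l : Filter α} {x : α → ι → ℝ} {c : ℝ}
    {i₀ i : ι} (hi : i ≠ i₀) (hsum : ∀ᶠ a in l, ∑ j, x a j = c)
    (hnn : ∀ᶠ a in l, ∀ j, 0 ≤ x a j) (h : Tendsto (fun a => x a i₀) l (𝓝 c)) :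
    Tendsto (fun a => x a i) l (𝓝 0) := by
  have hrest : Tendsto (fun a => c - x a i₀) l (𝓝 0) := by
    simpa using (tendsto_const_nhds (x := c)).sub h
  refine tendsto_of_tendsto_of_tendsto_of_le_of_le' tendsto_const_nhds hrest
    (hnn.mono fun a ha => ha i) ?_
  filter_upwards [hsum, hnn] with a hs ha
  have := add_le_sum (fun j _ => ha j) (mem_univ i) (mem_univ i₀) hi
  linarith

end

theorem stmt_9_general (n : ℕ) (hn : 0 < n) (δ m : Fin n → ℝ) (c : ℝ)
    (hδpos : ∀ i, 0 < δ i)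
    (hstrict : ∀ i : Fin n, 0 < (i : ℕ) → δ ⟨0, hn⟩ < δ i)
    (hc : 0 < c) (hcm : ∀ i, c ≤ m i)
    (X : ℝ → Fin n → ℝ)
    (hfeas : ∀ k : ℝ, 0 ≤ k →
      (∑ i, X k i = c ∧ ∀ i, 0 ≤ X k i ∧ X k i ≤ m i))
    (hopt : ∀ k : ℝ, 0 ≤ k →
      ∀ y : Fin n → ℝ, (∑ i, y i = c ∧ ∀ i, 0 ≤ y i ∧ y i ≤ m i) →
        ∑ i, δ i ^ k * (X k i) ^ 2 ≤ ∑ i, δ i ^ k * (y i) ^ 2) :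
    (∀ k : ℝ, 0 ≤ k →
      X k ⟨0, hn⟩ = c * (δ ⟨0, hn⟩) ^ (-k) / ∑ j, (δ j) ^ (-k)) ∧
    Tendsto (fun k : ℝ => X k ⟨0, hn⟩) atTop (nhds c) ∧
    ∀ i : Fin n, 0 < (i : ℕ) →
      Tendsto (fun k : ℝ => X k i) atTop (nhds 0) := by
  set i₀ : Fin n := ⟨0, hn⟩
  have : Nonempty (Fin n) := ⟨i₀⟩
  have hmin : ∀ j ≠ i₀, δ i₀ < δ j := fun j hj =>
    hstrict j (Nat.pos_of_ne_zero fun h => hj (Fin.ext h))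
  have hformula : ∀ k, 0 ≤ k → X k = proportionalAlloc (fun i => δ i ^ (-k)) c := by
    intro k hk
    have hinv : (fun i => δ i ^ (-k)) = fun i => (δ i ^ k)⁻¹ :=
      funext fun i => Real.rpow_neg (hδpos i).le k
    rw [hinv]
    exact eq_proportionalAlloc_of_isMinOn (fun i => Real.rpow_pos_of_pos (hδpos i) k) hc.le hcm
      (hfeas k hk).1 (isMinOn_iff.2 (hopt k hk))
  have hfirst : Tendsto (fun k => X k i₀) atTop (𝓝 c) := by
    have hshare := (tendsto_rpow_neg_div_sum_rpow_neg hδpos hmin).const_mul c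
    rw [mul_one] at hshare
    refine hshare.congr' ?_
    filter_upwards [eventually_ge_atTop 0] with k hk
    rw [hformula k hk, proportionalAlloc, mul_div_assoc]
  refine ⟨fun k hk => congrFun (hformula k hk) i₀, hfirst, fun i hi => ?_⟩
  have hfeas_ev := eventually_atTop.2 ⟨0, hfeas⟩
  exact tendsto_zero_of_sum_eq_of_tendsto (fun h => hi.ne' (congrArg Fin.val h))
    (hfeas_ev.mono fun k hk => hk.1) (hfeas_ev.mono fun k hk j => (hk.2 j).1) hfirst

/-- When no capacity binds, the allocation is proportional to δ_i^{-k}, and as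
    k → ∞ all work goes to the unique worker with smallest virtual welfare. -/
theorem stmt_9 (n : ℕ) (hn : 0 < n) (δ m : Fin n → ℝ) (c : ℝ)
    (hδpos : ∀ i, 0 < δ i) (hmono : Monotone δ)
    (hstrict : ∀ i : Fin n, 0 < (i : ℕ) → δ ⟨0, hn⟩ < δ i)
    (hm : ∀ i, 0 < m i) (hc : 0 < c) (hcm : ∀ i, c ≤ m i)
    (X : ℝ → Fin n → ℝ)
    (hfeas : ∀ k : ℝ, 0 ≤ k →
      (∑ i, X k i = c ∧ ∀ i, 0 ≤ X k i ∧ X k i ≤ m i))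
    (hopt : ∀ k : ℝ, 0 ≤ k →
      ∀ y : Fin n → ℝ, (∑ i, y i = c ∧ ∀ i, 0 ≤ y i ∧ y i ≤ m i) →
        ∑ i, δ i ^ k * (X k i) ^ 2 ≤ ∑ i, δ i ^ k * (y i) ^ 2) :
    (∀ k : ℝ, 0 ≤ k →
      X k ⟨0, hn⟩ = c * (δ ⟨0, hn⟩) ^ (-k) / ∑ j, (δ j) ^ (-k)) ∧
    Tendsto (fun k : ℝ => X k ⟨0, hn⟩) atTop (nhds c) ∧
    ∀ i : Fin n, 0 < (i : ℕ) →
      Tendsto (fun k : ℝ => X k i) atTop (nhds 0) :=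
  stmt_9_general n hn δ m c hδpos hstrict hc hcm X hfeas hopt
end

section
/- Let δ_1, …, δ_n > 0 and c > 0 with c ≤ min_i m_i, and define π^{(k)}_i = δ_i^{-k}/(∑_j δ_j^{-k}) for k ≥ 0. Then for each k there exists a threshold t > 0 such that π^{(k)}_i ≤ π^{(k+1)}_i whenever δ_i < t and π^{(k)}_i ≥ π^{(k+1)}_i whenever δ_i > t. -/
open Finset

/-- Single-crossing property: as k increases to k+1, the allocation shares
    π^{(k)}_i = δ_i^{-k}/∑_j δ_j^{-k} shift mass toward smaller δ_i, crossing
    the old distribution at a single threshold t. -/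
theorem stmt_10 (n : ℕ) (hn : 0 < n) (δ m : Fin n → ℝ) (c : ℝ)
    (hδ : ∀ i, 0 < δ i) (hm : ∀ i, 0 < m i)
    (hc : 0 < c) (hcm : ∀ i, c ≤ m i) :
    ∀ k : ℝ, 0 ≤ k → ∃ t : ℝ, 0 < t ∧ ∀ i : Fin n,
      (δ i < t →
        (δ i) ^ (-k) / (∑ j, (δ j) ^ (-k)) ≤
          (δ i) ^ (-(k+1)) / (∑ j, (δ j) ^ (-(k+1)))) ∧
      (t < δ i →
        (δ i) ^ (-(k+1)) / (∑ j, (δ j) ^ (-(k+1))) ≤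
          (δ i) ^ (-k) / (∑ j, (δ j) ^ (-k))) := by
  intro k hk
  have hne : (univ : Finset (Fin n)).Nonempty := univ_nonempty_iff.mpr ⟨⟨0, hn⟩⟩
  set Sk : ℝ := ∑ j, (δ j) ^ (-k) with hSk
  set Sk1 : ℝ := ∑ j, (δ j) ^ (-(k+1)) with hSk1
  have hSkpos : 0 < Sk :=
    Finset.sum_pos (fun j _ => Real.rpow_pos_of_pos (hδ j) _) hne
  have hSk1pos : 0 < Sk1 :=
    Finset.sum_pos (fun j _ => Real.rpow_pos_of_pos (hδ j) _) hne
  refine ⟨Sk / Sk1, div_pos hSkpos hSk1pos, fun i => ?_⟩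
  have hsplit : (δ i) ^ (-(k+1)) = (δ i) ^ (-k) * (δ i)⁻¹ := by
    rw [show (-(k+1)) = (-k) + (-1) by ring, Real.rpow_add (hδ i),
      Real.rpow_neg_one]
  have hpi : 0 < (δ i) ^ (-k) := Real.rpow_pos_of_pos (hδ i) _
  constructor
  · intro hlt
    rw [div_le_div_iff₀ hSkpos hSk1pos, hsplit]
    have : δ i * Sk1 ≤ Sk := by
      have h := (lt_div_iff₀ hSk1pos).mp hlt
      linarith
    calc (δ i) ^ (-k) * Sk1 = (δ i) ^ (-k) * (δ i)⁻¹ * (δ i * Sk1) := by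
          field_simp [(hδ i).ne']
      _ ≤ (δ i) ^ (-k) * (δ i)⁻¹ * Sk := by
          apply mul_le_mul_of_nonneg_left this
          exact mul_nonneg hpi.le (inv_nonneg.mpr (hδ i).le)
  · intro hlt
    rw [div_le_div_iff₀ hSk1pos hSkpos, hsplit]
    have h : Sk ≤ δ i * Sk1 := by
      have h := (div_lt_iff₀ hSk1pos).mp hlt
      linarith
    calc (δ i) ^ (-k) * (δ i)⁻¹ * Sk ≤ (δ i) ^ (-k) * (δ i)⁻¹ * (δ i * Sk1) := by
          apply mul_le_mul_of_nonneg_left h; exact mul_nonneg hpi.le (inv_nonneg.mpr (hδ i).le)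
      _ = (δ i) ^ (-k) * Sk1 := by field_simp [(hδ i).ne']
end

section
/- Suppose b is a random variable with continuous density f > 0 and CDF F on [0, B]. If δ(b) = b + F(b)/f(b) is such that F/f is differentiable and (F/f)'(b) ≥ −1 fails nowhere, i.e. δ is non-decreasing, and x(·) is any non-increasing allocation, then the expected Myerson payment satisfies E_b[b·x(b) + ∫_b^B x(s) ds] = E_b[δ(b)·x(b)]. -/
/-!
Writing the payment as `b x(b) + ∫_b^B x`, the claim reduces, after cancelling the common term
`∫ b x(b) f(b)` (which uses `f > 0` to simplify `(F/f) f = F`), to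
`∫₀^B (∫_b^B x) f(b) db = ∫₀^B F(s) x(s) ds`. Both sides are the integral of `f(b) x(s)` over the
triangle `0 < b < s ≤ B`, computed in the two orders (Fubini); monotonicity of `x` only serves to
make it integrable.
-/

open MeasureTheory Set

theorem setIntegral_Ioc_integral_mul_swap (μ : Measure ℝ) [SFinite μ] {a b : ℝ} {f g : ℝ → ℝ}
    (hf : IntegrableOn f (Ioc a b) μ) (hg : IntegrableOn g (Ioc a b) μ) :
    ∫ t in Ioc a b, (∫ s in Ioc t b, g s ∂μ) * f t ∂μ =
      ∫ s in Ioc a b, (∫ t in Ioo a s, f t ∂μ) * g s ∂μ := by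
  let H : ℝ → ℝ → ℝ := fun t s =>
    {p : ℝ × ℝ | p.1 < p.2}.indicator (fun p => f p.1 * g p.2) (t, s)
  have hH : Integrable (Function.uncurry H)
      ((μ.restrict (Ioc a b)).prod (μ.restrict (Ioc a b))) :=
    (hf.mul_prod hg).indicator (measurableSet_lt measurable_fst measurable_snd)
  calc ∫ t in Ioc a b, (∫ s in Ioc t b, g s ∂μ) * f t ∂μ
      = ∫ t in Ioc a b, ∫ s in Ioc a b, H t s ∂μ ∂μ := by
        refine setIntegral_congr_fun measurableSet_Ioc fun t ht => ?_
        have hHt : H t = (Ioi t).indicator fun s => f t * g s := by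
          ext s; simp [H, indicator_apply]
        rw [hHt, setIntegral_indicator measurableSet_Ioi, Ioc_inter_Ioi, max_eq_right ht.1.le,
          integral_const_mul, mul_comm]
    _ = ∫ s in Ioc a b, ∫ t in Ioc a b, H t s ∂μ ∂μ := integral_integral_swap hH
    _ = ∫ s in Ioc a b, (∫ t in Ioo a s, f t ∂μ) * g s ∂μ := by
        refine setIntegral_congr_fun measurableSet_Ioc fun s hs => ?_
        have hHs : (fun t => H t s) = (Iio s).indicator fun t => f t * g s := by
          ext t; simp [H, indicator_apply]
        have hIoo : Ioc a b ∩ Iio s = Ioo a s := by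
          ext t; simp only [mem_inter_iff, mem_Ioc, mem_Iio, mem_Ioo]; grind
        rw [hHs, setIntegral_indicator measurableSet_Iio, hIoo, integral_mul_const]

theorem intervalIntegral.integral_integral_mul_swap (μ : Measure ℝ) [SFinite μ]
    [NullSingletonClass μ] {a b : ℝ} (hab : a ≤ b) {f g : ℝ → ℝ} (hf : IntervalIntegrable f μ a b)
    (hg : IntervalIntegrable g μ a b) :
    ∫ t in a..b, (∫ s in t..b, g s ∂μ) * f t ∂μ =
      ∫ s in a..b, (∫ t in a..s, f t ∂μ) * g s ∂μ := by
  calc ∫ t in a..b, (∫ s in t..b, g s ∂μ) * f t ∂μ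
      = ∫ t in Ioc a b, (∫ s in Ioc t b, g s ∂μ) * f t ∂μ := by
        rw [integral_of_le hab]
        exact setIntegral_congr_fun measurableSet_Ioc fun t ht => by rw [integral_of_le ht.2]
    _ = ∫ s in Ioc a b, (∫ t in Ioo a s, f t ∂μ) * g s ∂μ :=
        setIntegral_Ioc_integral_mul_swap μ hf.1 hg.1
    _ = ∫ s in a..b, (∫ t in a..s, f t ∂μ) * g s ∂μ := by
        rw [integral_of_le hab]
        exact setIntegral_congr_fun measurableSet_Ioc fun s hs => by
          rw [integral_of_le hs.1.le, integral_Ioc_eq_integral_Ioo]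

theorem stmt_14_general (B : ℝ) (hB : 0 < B) (f : ℝ → ℝ) (x : ℝ → ℝ)
    (hf : Continuous f) (hfpos : ∀ b ∈ Set.Icc (0:ℝ) B, 0 < f b)
    (hx : AntitoneOn x (Set.Icc 0 B)) :
    ∫ b in (0:ℝ)..B, (b * x b + ∫ s in b..B, x s) * f b =
      ∫ b in (0:ℝ)..B,
        (b + (∫ s in (0:ℝ)..b, f s) / f b) * x b * f b := by
  have hI : uIcc 0 B = Icc 0 B := uIcc_of_le hB.le
  have hxint' : IntegrableOn x (uIcc 0 B) := (hI ▸ hx).integrableOn_isCompact isCompact_uIcc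
  have hxint : IntervalIntegrable x volume 0 B := hxint'.intervalIntegrable
  have hfint : IntervalIntegrable f volume 0 B := hf.intervalIntegrable 0 B
  have hbxf : IntervalIntegrable (fun b => b * x b * f b) volume 0 B :=
    (hxint.continuousOn_mul continuousOn_id).mul_continuousOn hf.continuousOn
  have hpayment : ∫ b in (0:ℝ)..B, (b * x b + ∫ s in b..B, x s) * f b =
      (∫ b in (0:ℝ)..B, b * x b * f b) + ∫ b in (0:ℝ)..B, (∫ s in b..B, x s) * f b := by
    simp_rw [add_mul]
    exact intervalIntegral.integral_add hbxf <| hfint.continuousOn_mul <|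
      intervalIntegral.continuousOn_primitive_interval_left hxint'
  have hvirtual : ∫ b in (0:ℝ)..B, (b + (∫ s in (0:ℝ)..b, f s) / f b) * x b * f b =
      (∫ b in (0:ℝ)..B, b * x b * f b) +
        ∫ b in (0:ℝ)..B, (∫ s in (0:ℝ)..b, f s) * x b := by
    rw [← intervalIntegral.integral_add hbxf <| hxint.continuousOn_mul <|
      (intervalIntegral.continuous_primitive (fun _ _ => hf.intervalIntegrable _ _) 0).continuousOn]
    refine intervalIntegral.integral_congr fun b hb => ?_
    have hfb : f b ≠ 0 := (hfpos b (hI ▸ hb)).ne'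
    field_simp
  rw [hpayment, hvirtual, intervalIntegral.integral_integral_mul_swap volume hB.le hfint hxint]

/-- Myerson's virtual-welfare identity: the expected payment equals the
    expectation of the virtual welfare δ(b) = b + F(b)/f(b) times the
    allocation. -/
theorem stmt_14 (B : ℝ) (hB : 0 < B) (f : ℝ → ℝ) (x : ℝ → ℝ)
    (hf : Continuous f) (hfpos : ∀ b ∈ Set.Icc (0:ℝ) B, 0 < f b)
    (hx : AntitoneOn x (Set.Icc 0 B))
    (hδmono : MonotoneOn
      (fun b => b + (∫ s in (0:ℝ)..b, f s) / f b) (Set.Icc 0 B)) :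
    ∫ b in (0:ℝ)..B, (b * x b + ∫ s in b..B, x s) * f b =
      ∫ b in (0:ℝ)..B,
        (b + (∫ s in (0:ℝ)..b, f s) / f b) * x b * f b :=
  stmt_14_general B hB f x hf hfpos hx
end

section
/- Consider Algorithm: initialize A := ∅; repeatedly set x_i = m_i for i ∈ A and x_i = c′(A)·a_i/(∑_{j∉A} a_j) for i ∉ A where c′(A) = c − ∑_{j∈A} m_j and a_i = δ_i^{-k}; add to A all i ∉ A with x_i > m_i; stop when no violations. Given δ_i > 0, m_i > 0, 0 < c ≤ ∑_i m_i, this algorithm terminates in at most n iterations and its output is the unique optimal solution of: minimize ∑_i δ_i^k x_i^2 subject to ∑ x_i = c, 0 ≤ x_i ≤ m_i. -/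
open Finset
open scoped Classical

/-- The allocation rule given a set A of capped workers: capped workers get
    their capacity m_i, the rest share the remaining work proportionally
    to a_i. -/
noncomputable def alloc {n : ℕ} (a m : Fin n → ℝ) (c : ℝ)
    (A : Finset (Fin n)) (i : Fin n) : ℝ :=
  if i ∈ A then m i
  else (c - ∑ j ∈ A, m j) * a i / ∑ j ∈ Aᶜ, a j

/-- One iteration of the water-filling algorithm: add all workers whose
    tentative allocation exceeds their capacity. -/
noncomputable def step {n : ℕ} (a m : Fin n → ℝ) (c : ℝ)
    (A : Finset (Fin n)) : Finset (Fin n) :=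
  A ∪ (Aᶜ.filter fun i => m i < alloc a m c A i)

section Aux

variable {n : ℕ} {a m : Fin n → ℝ} {c : ℝ}

/-- Invariant maintained by the algorithm: the capped workers have total
capacity strictly below `c`, and each capped worker `i` satisfies
`m i / a i ≤ c'(A) / T(A)` (water level dominates capped levels). -/
def WfInv (a m : Fin n → ℝ) (c : ℝ) (A : Finset (Fin n)) : Prop :=
  (∑ j ∈ A, m j < c) ∧
  ∀ i ∈ A, m i * (∑ j ∈ Aᶜ, a j) ≤ (c - ∑ j ∈ A, m j) * a i

lemma compl_sum_pos (ha : ∀ i, 0 < a i) (hm : ∀ i, 0 < m i)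
    (hcm : c ≤ ∑ i, m i) {A : Finset (Fin n)} (h : WfInv a m c A) :
    0 < ∑ j ∈ Aᶜ, a j := by
  have hne : Aᶜ.Nonempty := by
    by_contra hni
    rw [not_nonempty_iff_eq_empty, compl_eq_empty_iff] at hni
    rw [hni] at h
    exact absurd hcm (not_le.2 h.1)
  exact sum_pos (fun i _ => ha i) hne

lemma inv_step (ha : ∀ i, 0 < a i) (hm : ∀ i, 0 < m i)
    (hcm : c ≤ ∑ i, m i) {A : Finset (Fin n)} (h : WfInv a m c A) :
    WfInv a m c (step a m c A) := by
  classical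
  by_cases hS : Aᶜ.filter (fun i => m i < alloc a m c A i) = ∅
  · have : step a m c A = A := by rw [step, hS, union_empty]
    rw [this]; exact h
  · set S := Aᶜ.filter (fun i => m i < alloc a m c A i) with hSdef
    have hT : 0 < ∑ j ∈ Aᶜ, a j := compl_sum_pos ha hm hcm h
    set T := ∑ j ∈ Aᶜ, a j with hTdef
    set c' := c - ∑ j ∈ A, m j with hc'def
    have hc' : 0 < c' := sub_pos.2 h.1
    have hSsub : S ⊆ Aᶜ := filter_subset _ _
    have hSstrict : ∀ i ∈ S, m i * T < c' * a i := by
      intro i hi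
      obtain ⟨hi1, hi2⟩ := mem_filter.1 hi
      have he : alloc a m c A i = c' * a i / T := by
        rw [alloc, if_neg (mem_compl.1 hi1)]
      rw [he, lt_div_iff₀ hT] at hi2
      exact hi2
    have hSne : S.Nonempty := nonempty_iff_ne_empty.2 hS
    have hSsum : (∑ i ∈ S, m i) * T < c' * ∑ i ∈ S, a i := by
      rw [sum_mul, mul_sum]
      exact sum_lt_sum_of_nonempty hSne hSstrict
    have hSneq : S ≠ Aᶜ := by
      intro hEq
      have h1 : (∑ i ∈ Aᶜ, m i) * T < c' * T := by
        rw [← hEq]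
        calc (∑ i ∈ S, m i) * T < c' * ∑ i ∈ S, a i := hSsum
          _ ≤ c' * T := by
              apply mul_le_mul_of_nonneg_left _ hc'.le
              rw [hEq]
      have h2 : ∑ i ∈ Aᶜ, m i < c' := lt_of_mul_lt_mul_right h1 hT.le |>.trans_le le_rfl
      have h3 := Finset.sum_add_sum_compl A m
      have := hcm
      rw [← h3] at this
      simp only [hc'def] at h2
      linarith
    obtain ⟨i0, hi0c, hi0s⟩ := Finset.exists_of_ssubset (hSsub.ssubset_of_ne hSneq)
    have hTa : ∑ i ∈ S, a i < T := by
      apply sum_lt_sum_of_subset hSsub hi0c hi0s (ha i0)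
      intro j _ _
      exact (ha j).le
    have hdisj : Disjoint A S := by
      rw [disjoint_left]
      intro i hiA hiS
      exact (mem_compl.1 (hSsub hiS)) hiA
    have hstep : step a m c A = A ∪ S := rfl
    have hsumm : ∑ j ∈ A ∪ S, m j = (∑ j ∈ A, m j) + ∑ j ∈ S, m j := sum_union hdisj
    have hcompl : (A ∪ S)ᶜ = Aᶜ \ S := by
      ext i
      simp only [mem_compl, mem_union, mem_sdiff, not_or]
    have hsuma : ∑ j ∈ (A ∪ S)ᶜ, a j = T - ∑ i ∈ S, a i := by
      rw [hcompl, sum_sdiff_eq_sub hSsub]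
    set T' := T - ∑ i ∈ S, a i with hT'def
    have hT' : 0 < T' := sub_pos.2 hTa
    set c'' := c' - ∑ i ∈ S, m i with hc''def
    have hkey : c' * T' ≤ c'' * T := by
      rw [hT'def, hc''def]
      nlinarith [hSsum]
    have hc'' : 0 < c'' := by
      nlinarith [mul_pos hc' hT', hT, hkey]
    rw [hstep]
    constructor
    · rw [hsumm]
      simp only [hc''def, hc'def] at hc''
      linarith
    · intro i hi
      rw [hsumm, hsuma]
      have hgoal : m i * T' ≤ c'' * a i → m i * T' ≤ (c - ((∑ j ∈ A, m j) + ∑ j ∈ S, m j)) * a i := by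
        intro hh
        have : c'' = c - ((∑ j ∈ A, m j) + ∑ j ∈ S, m j) := by
          rw [hc''def, hc'def]; ring
        rwa [this] at hh
      apply hgoal
      rcases mem_union.1 hi with hiA | hiS
      · have h1 : m i * T ≤ c' * a i := h.2 i hiA
        nlinarith [mul_le_mul_of_nonneg_right h1 hT'.le,
          mul_le_mul_of_nonneg_right hkey (ha i).le, hT]
      · have h1 : m i * T ≤ c' * a i := (hSstrict i hiS).le
        nlinarith [mul_le_mul_of_nonneg_right h1 hT'.le,
          mul_le_mul_of_nonneg_right hkey (ha i).le, hT]

lemma iterate_inv_fixed (ha : ∀ i, 0 < a i) (hm : ∀ i, 0 < m i)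
    (hc : 0 < c) (hcm : c ≤ ∑ i, m i) :
    WfInv a m c ((step a m c)^[n] ∅) ∧
      step a m c ((step a m c)^[n] ∅) = (step a m c)^[n] ∅ := by
  classical
  have key : ∀ j, WfInv a m c ((step a m c)^[j] ∅) ∧
      (j ≤ ((step a m c)^[j] ∅).card ∨
        step a m c ((step a m c)^[j] ∅) = (step a m c)^[j] ∅) := by
    intro j
    induction j with
    | zero =>
      refine ⟨⟨by simpa using hc, ?_⟩, Or.inl (Nat.zero_le _)⟩
      intro i hi
      simp at hi
    | succ j ih =>
      rw [Function.iterate_succ_apply']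
      refine ⟨inv_step ha hm hcm ih.1, ?_⟩
      rcases ih.2 with hcard | hfix
      · by_cases hfe : step a m c ((step a m c)^[j] ∅) = (step a m c)^[j] ∅
        · right; rw [hfe]; exact hfe
        · left
          have hsub : (step a m c)^[j] ∅ ⊂ step a m c ((step a m c)^[j] ∅) :=
            (subset_union_left).ssubset_of_ne (Ne.symm hfe)
          exact Nat.succ_le_of_lt (lt_of_le_of_lt hcard (card_lt_card hsub))
      · right; rw [hfix]; exact hfix
  obtain ⟨hinv, hcase⟩ := key n
  refine ⟨hinv, ?_⟩
  rcases hcase with hcard | hfix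
  · exfalso
    have hle : ((step a m c)^[n] ∅).card ≤ n := by
      simpa using card_le_univ ((step a m c)^[n] ∅)
    have hcards : ((step a m c)^[n] ∅).card = Fintype.card (Fin n) := by
      simp only [Fintype.card_fin]; omega
    have huniv : (step a m c)^[n] ∅ = univ := Finset.eq_univ_of_card _ hcards
    have h1 := hinv.1
    rw [huniv] at h1
    exact absurd hcm (not_le.2 h1)
  · exact hfix

end Aux

/-- The iterative water-filling algorithm terminates in at most n iterations,
    and its output is the unique optimal solution of the quadratic program
    minimize ∑ δ_i^k x_i², s.t. ∑ x_i = c, 0 ≤ x_i ≤ m_i. -/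
theorem stmt_17 (n : ℕ) (δ m : Fin n → ℝ) (k c : ℝ)
    (hδ : ∀ i, 0 < δ i) (hm : ∀ i, 0 < m i)
    (hc : 0 < c) (hcm : c ≤ ∑ i, m i)
    (a : Fin n → ℝ) (ha : ∀ i, a i = δ i ^ (-k))
    (A : Finset (Fin n)) (hA : A = (step a m c)^[n] ∅)
    (x : Fin n → ℝ) (hx : x = alloc a m c A) :
    step a m c A = A ∧
    (∑ i, x i = c ∧ ∀ i, 0 ≤ x i ∧ x i ≤ m i) ∧
    (∀ y : Fin n → ℝ, (∑ i, y i = c ∧ ∀ i, 0 ≤ y i ∧ y i ≤ m i) →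
      ∑ i, δ i ^ k * (x i) ^ 2 ≤ ∑ i, δ i ^ k * (y i) ^ 2 ∧
      (∑ i, δ i ^ k * (y i) ^ 2 = ∑ i, δ i ^ k * (x i) ^ 2 → y = x)) := by
  classical
  have ha' : ∀ i, 0 < a i := fun i => by
    rw [ha i]; exact Real.rpow_pos_of_pos (hδ i) _
  obtain ⟨hinv, hfix⟩ := iterate_inv_fixed (n := n) (a := a) (m := m) (c := c) ha' hm hc hcm
  rw [← hA] at hinv hfix
  subst hx
  have hT : 0 < ∑ j ∈ Aᶜ, a j := compl_sum_pos ha' hm hcm hinv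
  set T := ∑ j ∈ Aᶜ, a j with hTdef
  set c' := c - ∑ j ∈ A, m j with hc'def
  have hc' : 0 < c' := sub_pos.2 hinv.1
  -- values of alloc
  have hallocA : ∀ i ∈ A, alloc a m c A i = m i := by
    intro i hi; rw [alloc, if_pos hi]
  have hallocC : ∀ i ∈ Aᶜ, alloc a m c A i = c' * a i / T := by
    intro i hi; rw [alloc, if_neg (mem_compl.1 hi)]
  -- fixed point gives the upper bound on the uncapped side
  have hbound : ∀ i ∈ Aᶜ, alloc a m c A i ≤ m i := by
    intro i hi
    by_contra hlt
    push_neg at hlt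
    have hmem : i ∈ A := by
      rw [← hfix, step]
      exact mem_union_right _ (mem_filter.2 ⟨hi, hlt⟩)
    exact (mem_compl.1 hi) hmem
  -- sums
  have hsumA : ∑ i ∈ A, alloc a m c A i = ∑ i ∈ A, m i :=
    sum_congr rfl hallocA
  have hsumC : ∑ i ∈ Aᶜ, alloc a m c A i = c' := by
    rw [sum_congr rfl hallocC]
    calc ∑ i ∈ Aᶜ, c' * a i / T = (c' / T) * ∑ i ∈ Aᶜ, a i := by
          rw [mul_sum]
          exact sum_congr rfl fun i _ => by ring
      _ = c' := by
          rw [← hTdef]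
          field_simp
  have hsumx : ∑ i, alloc a m c A i = c := by
    rw [← Finset.sum_add_sum_compl A, hsumA, hsumC]
    rw [hc'def]; ring
  have hbounds : ∀ i, 0 ≤ alloc a m c A i ∧ alloc a m c A i ≤ m i := by
    intro i
    by_cases hi : i ∈ A
    · rw [hallocA i hi]
      exact ⟨(hm i).le, le_rfl⟩
    · have hi' : i ∈ Aᶜ := mem_compl.2 hi
      constructor
      · rw [hallocC i hi']
        exact div_nonneg (mul_nonneg hc'.le (ha' i).le) hT.le
      · exact hbound i hi'
  -- weights
  have haw : ∀ i, a i * δ i ^ k = 1 := by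
    intro i
    rw [ha i, ← Real.rpow_add (hδ i), neg_add_cancel, Real.rpow_zero]
  have hw : ∀ i, 0 < δ i ^ k := fun i => Real.rpow_pos_of_pos (hδ i) k
  refine ⟨hfix, ⟨hsumx, hbounds⟩, ?_⟩
  rintro y ⟨hy1, hy2⟩
  -- the cross term
  have hycompl : ∑ i ∈ Aᶜ, (y i - alloc a m c A i) = ∑ i ∈ A, (m i - y i) := by
    have e1 := Finset.sum_add_sum_compl A y
    have e2 := Finset.sum_add_sum_compl A (alloc a m c A)
    rw [sum_sub_distrib, sum_sub_distrib]
    rw [hy1] at e1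
    rw [hsumx] at e2
    rw [hsumA] at e2
    linarith
  have hcross_eq : ∑ i, (δ i ^ k * alloc a m c A i) * (y i - alloc a m c A i)
      = ∑ i ∈ A, (m i - y i) * (c' / T - δ i ^ k * m i) := by
    rw [← Finset.sum_add_sum_compl A]
    have e1 : ∑ i ∈ A, (δ i ^ k * alloc a m c A i) * (y i - alloc a m c A i)
        = ∑ i ∈ A, (δ i ^ k * m i) * (y i - m i) :=
      sum_congr rfl fun i hi => by rw [hallocA i hi]
    have e2 : ∑ i ∈ Aᶜ, (δ i ^ k * alloc a m c A i) * (y i - alloc a m c A i)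
        = (c' / T) * ∑ i ∈ Aᶜ, (y i - alloc a m c A i) := by
      rw [mul_sum]
      refine sum_congr rfl fun i hi => ?_
      have hv : δ i ^ k * alloc a m c A i = c' / T := by
        rw [hallocC i hi]
        rw [show δ i ^ k * (c' * a i / T) = (c' / T) * (a i * δ i ^ k) by ring,
          haw i, mul_one]
      rw [hv]
    rw [e1, e2, hycompl, mul_sum, ← sum_add_distrib]
    exact sum_congr rfl fun i hi => by ring
  have hterm : ∀ i ∈ A, 0 ≤ (m i - y i) * (c' / T - δ i ^ k * m i) := by
    intro i hi
    apply mul_nonneg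
    · exact sub_nonneg.2 (hy2 i).2
    · apply sub_nonneg.2
      rw [le_div_iff₀ hT]
      have h1 : m i * T ≤ c' * a i := hinv.2 i hi
      have h2 : (δ i ^ k) * (c' * a i) = c' := by
        rw [show (δ i ^ k) * (c' * a i) = c' * (a i * δ i ^ k) by ring, haw i, mul_one]
      nlinarith [mul_le_mul_of_nonneg_left h1 (hw i).le]
  have hcross : 0 ≤ ∑ i, (δ i ^ k * alloc a m c A i) * (y i - alloc a m c A i) := by
    rw [hcross_eq]
    exact sum_nonneg hterm
  have hdecomp : ∑ i, δ i ^ k * (y i) ^ 2 - ∑ i, δ i ^ k * (alloc a m c A i) ^ 2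
      = (∑ i, δ i ^ k * (y i - alloc a m c A i) ^ 2)
        + 2 * ∑ i, (δ i ^ k * alloc a m c A i) * (y i - alloc a m c A i) := by
    rw [← sum_sub_distrib, mul_sum, ← sum_add_distrib]
    exact sum_congr rfl fun i _ => by ring
  have hqd : 0 ≤ ∑ i, δ i ^ k * (y i - alloc a m c A i) ^ 2 :=
    sum_nonneg fun i _ => mul_nonneg (hw i).le (sq_nonneg _)
  constructor
  · linarith
  · intro heq
    have hzero : ∑ i, δ i ^ k * (y i - alloc a m c A i) ^ 2 = 0 := by linarith
    have hterms := (Finset.sum_eq_zero_iff_of_nonneg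
      (fun i _ => mul_nonneg (hw i).le (sq_nonneg (y i - alloc a m c A i)))).1 hzero
    funext i
    have hi := hterms i (mem_univ i)
    have h2 : (y i - alloc a m c A i) ^ 2 = 0 := by
      rcases mul_eq_zero.1 hi with h | h
      · exact absurd h (ne_of_gt (hw i))
      · exact h
    have := pow_eq_zero_iff (n := 2) (by norm_num) |>.1 h2
    exact sub_eq_zero.1 this
end
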